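/- arXiv:2006.15737 — 2 statements merged into one kernel-verified Lean document; each statement's English description precedes it below -/
import Mathlib

section
/- Let G be a p-group of maximal class. If N is a normal subgroup of G of index at least p^3 in G, then the quotient G/N is also a p-group of maximal class. -/
/-!
A group of order `p ^ n`, `n ≥ 2`, has class at most `n - 1`: the upper central series grows by
a factor at least `p` at each step, and its last proper term `Z_(k+1)` has index at least `p ^ 2`,
because if `G ⧸ Z_(k+1)` were cyclic, so would be `G ⧸ Z_k` modulo its centre, making `G ⧸ Z_k`
abelian and `Z_(k+1) = G`.
This bounds the class of `G ⧸ N` by `i - 1`. Conversely, the lower central series of `G` strictly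
descends to `⊥` in `m - 1` steps, so `|γ_d(G)| ≥ p ^ (m - 1 - d)`. If `G ⧸ N` had class
`d ≤ i - 2`, then `γ_d(G) ≤ N`, hence `p ^ i = |G : N| ≤ |G : γ_d(G)| ≤ p ^ (d + 1) ≤ p ^ (i - 1)`.
-/

/-- A finite `p`-group is of *maximal class* if it has order `p ^ m` for some `m ≥ 2`
and its nilpotency class is exactly `m - 1`. -/
def IsMaximalClass (p : ℕ) (G : Type*) [Group G] : Prop :=
  ∃ m : ℕ, 2 ≤ m ∧ Nat.card G = p ^ m ∧
    upperCentralSeries G (m - 1) = ⊤ ∧ upperCentralSeries G (m - 2) ≠ ⊤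

namespace Subgroup

open QuotientGroup Group

variable {G : Type*} [Group G]

theorem upperCentralSeries_succ_eq_top_of_isCyclic (k : ℕ)
    [IsCyclic (G ⧸ upperCentralSeries G (k + 1))] : upperCentralSeries G (k + 1) = ⊤ := by
  have hZ : upperCentralSeries G (k + 1) =
      comap (mk' (upperCentralSeries G k)) (center (G ⧸ upperCentralSeries G k)) :=
    upperCentralSeriesStep_eq_comap_center (upperCentralSeries G k)
  let f : G ⧸ upperCentralSeries G k →* G ⧸ upperCentralSeries G (k + 1) :=
    QuotientGroup.map _ _ (MonoidHom.id G) (upperCentralSeries_mono G k.le_succ)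
  have hf : f.ker ≤ center (G ⧸ upperCentralSeries G k) := by
    rintro ⟨x⟩ hx
    have hx : x ∈ upperCentralSeries G (k + 1) := (QuotientGroup.eq_one_iff x).mp hx
    rwa [hZ] at hx
  have := f.isMulCommutative_of_isCyclic_of_ker_le_center hf
  rw [hZ, center_eq_top, comap_top]

theorem lowerCentralSeries_add_eq_of_succ_eq (S : Subgroup G) {k : ℕ}
    (h : S.lowerCentralSeries (k + 1) = S.lowerCentralSeries k) (t : ℕ) :
    S.lowerCentralSeries (k + t) = S.lowerCentralSeries k := by
  induction t with
  | zero => rfl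
  | succ t ih => rw [← add_assoc, lowerCentralSeries_succ, ih, ← lowerCentralSeries_succ, h]

theorem lowerCentralSeries_succ_lt [IsNilpotent G] {j : ℕ} (hj : j < nilpotencyClass G) :
    (⊤ : Subgroup G).lowerCentralSeries (j + 1) < (⊤ : Subgroup G).lowerCentralSeries j := by
  refine (lowerCentralSeries_antitone _ j.le_succ).lt_of_ne fun h => hj.not_ge ?_
  rw [← lowerCentralSeries_eq_bot_iff_nilpotencyClass_le,
    ← lowerCentralSeries_add_eq_of_succ_eq _ h (nilpotencyClass G - j), Nat.add_sub_cancel' hj.le,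
    lowerCentralSeries_nilpotencyClass]

end Subgroup

namespace IsPGroup

open Group

variable {p : ℕ} [Fact p.Prime] {G : Type*} [Group G] [Finite G] (hG : IsPGroup p G)
include hG

theorem card_mul_dvd_card_of_lt {H K : Subgroup G} (h : H < K) :
    Nat.card H * p ∣ Nat.card K := by
  obtain ⟨n, hn⟩ := iff_card.mp (hG.to_subgroup K)
  obtain ⟨e, -, he⟩ := (Nat.dvd_prime_pow Fact.out).mp (hn ▸ H.relIndex_dvd_card K)
  have he0 : e ≠ 0 := by
    rintro rfl
    exact h.not_ge (Subgroup.relIndex_eq_one.mp he)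
  rw [← Subgroup.relIndex_bot_left, ← Subgroup.relIndex_bot_left,
    ← Subgroup.relIndex_mul_relIndex _ _ _ bot_le h.le, he]
  exact mul_dvd_mul_left _ (dvd_pow_self p he0)

theorem card_mul_pow_dvd_card_of_lt_succ {f : ℕ → Subgroup G} {k : ℕ}
    (hf : ∀ j < k, f j < f (j + 1)) : Nat.card (f 0) * p ^ k ∣ Nat.card (f k) := by
  induction k with
  | zero => simp
  | succ k ih =>
    rw [pow_succ, ← mul_assoc]
    exact (mul_dvd_mul_right (ih fun j hj => hf j (by omega)) p).trans
      (hG.card_mul_dvd_card_of_lt (hf k k.lt_succ_self))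

theorem pow_dvd_card_upperCentralSeries {k : ℕ} (hk : k ≤ nilpotencyClass G) :
    p ^ k ∣ Nat.card (Subgroup.upperCentralSeries G k) := by
  have hmono := Subgroup.upperCentralSeries.StrictMonoOn G
  simpa using hG.card_mul_pow_dvd_card_of_lt_succ (f := Subgroup.upperCentralSeries G) fun j hj =>
    hmono (by simp; omega) (by simp; omega) j.lt_succ_self

theorem pow_sub_dvd_card_lowerCentralSeries (j : ℕ) :
    p ^ (nilpotencyClass G - j) ∣ Nat.card ((⊤ : Subgroup G).lowerCentralSeries j) := by
  have := hG.isNilpotent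
  set c := nilpotencyClass G
  rcases le_or_gt c j with hj | hj
  · simp [Nat.sub_eq_zero_of_le hj]
  have hchain := hG.card_mul_pow_dvd_card_of_lt_succ
    (f := fun t => (⊤ : Subgroup G).lowerCentralSeries (c - t)) (k := c - j) fun t ht => by
      simpa [show c - t = c - (t + 1) + 1 by omega] using
        Subgroup.lowerCentralSeries_succ_lt (j := c - (t + 1)) (by omega)
  rwa [Nat.sub_zero, Subgroup.lowerCentralSeries_nilpotencyClass, Subgroup.card_bot, one_mul,
    Nat.sub_sub_self hj.le] at hchain

theorem sq_dvd_index_upperCentralSeries_succ {k : ℕ}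
    (hk : Subgroup.upperCentralSeries G (k + 1) ≠ ⊤) :
    p ^ 2 ∣ (Subgroup.upperCentralSeries G (k + 1)).index := by
  obtain ⟨e, he⟩ := hG.index (Subgroup.upperCentralSeries G (k + 1))
  have he0 : e ≠ 0 := by
    rintro rfl
    exact hk (Subgroup.index_eq_one.mp he)
  have he1 : e ≠ 1 := by
    rintro rfl
    rw [Subgroup.index_eq_card, pow_one] at he
    have := isCyclic_of_prime_card he
    exact hk (Subgroup.upperCentralSeries_succ_eq_top_of_isCyclic k)
  rw [he]
  exact pow_dvd_pow p (by omega)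

theorem index_mul_pow_dvd_card (N : Subgroup G) [N.Normal] :
    N.index * p ^ (nilpotencyClass G - nilpotencyClass (G ⧸ N)) ∣ Nat.card G := by
  have := (hG.to_quotient N).isNilpotent
  have hle : (⊤ : Subgroup G).lowerCentralSeries (nilpotencyClass (G ⧸ N)) ≤ N := by
    have hbot : ((⊤ : Subgroup G).lowerCentralSeries (nilpotencyClass (G ⧸ N))).map
        (QuotientGroup.mk' N) = ⊥ := by
      rw [Subgroup.map_lowerCentralSeries,
        Subgroup.map_top_of_surjective _ (QuotientGroup.mk'_surjective N),
        Subgroup.lowerCentralSeries_nilpotencyClass]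
    simpa using (Subgroup.map_eq_bot_iff _).mp hbot
  calc N.index * p ^ (nilpotencyClass G - nilpotencyClass (G ⧸ N))
      ∣ ((⊤ : Subgroup G).lowerCentralSeries (nilpotencyClass (G ⧸ N))).index *
          Nat.card ((⊤ : Subgroup G).lowerCentralSeries (nilpotencyClass (G ⧸ N))) :=
        mul_dvd_mul (Subgroup.index_dvd_of_le hle) (hG.pow_sub_dvd_card_lowerCentralSeries _)
    _ = Nat.card G := by rw [mul_comm, Subgroup.card_mul_index]

end IsPGroup

namespace Group

theorem nilpotencyClass_le_of_card_eq_prime_pow {p n : ℕ} [Fact p.Prime] {G : Type*}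
    [Group G] [Finite G] (hcard : Nat.card G = p ^ n) (hn : 2 ≤ n) :
    nilpotencyClass G ≤ n - 1 := by
  have hG := IsPGroup.of_card hcard
  have := hG.isNilpotent
  by_contra! hlt
  obtain ⟨k, hk⟩ : ∃ k, nilpotencyClass G = k + 2 := ⟨nilpotencyClass G - 2, by omega⟩
  have hne : Subgroup.upperCentralSeries G (k + 1) ≠ ⊤ := by
    rw [Ne, Subgroup.upperCentralSeries_eq_top_iff_nilpotencyClass_le]
    omega
  have hdvd := mul_dvd_mul (hG.pow_dvd_card_upperCentralSeries (k := k + 1) (by omega))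
    (hG.sq_dvd_index_upperCentralSeries_succ hne)
  rw [Subgroup.card_mul_index, hcard, ← pow_add,
    Nat.pow_dvd_pow_iff_le_right (Fact.out : p.Prime).one_lt] at hdvd
  omega

end Group

theorem stmt_8_general {p m : ℕ} (hp : p.Prime) (G : Type*) [Group G]
    (hG : Nat.card G = p ^ m)
    (hcl : upperCentralSeries G (m - 1) = ⊤) (hcl2 : upperCentralSeries G (m - 2) ≠ ⊤)
    (N : Subgroup G) (hN : N.Normal) (i : ℕ) (hi : 3 ≤ i) (hidx : N.index = p ^ i) :
    IsMaximalClass p (G ⧸ N) := by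
  have := Fact.mk hp
  have : Finite G := Nat.finite_of_card_ne_zero (hG ▸ (pow_pos hp.pos m).ne')
  have hpG := IsPGroup.of_card hG
  have := hpG.isNilpotent
  have hclass : Group.nilpotencyClass G = m - 1 := by
    have hle := Subgroup.upperCentralSeries_eq_top_iff_nilpotencyClass_le.mp hcl
    have hge := mt Subgroup.upperCentralSeries_eq_top_iff_nilpotencyClass_le.mpr hcl2
    omega
  have hcardQ : Nat.card (G ⧸ N) = p ^ i := by rw [← N.index_eq_card, hidx]
  have := (IsPGroup.of_card hcardQ).isNilpotent
  refine ⟨i, by omega, hcardQ, ?_, fun htop => ?_⟩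
  · exact Subgroup.upperCentralSeries_eq_top_iff_nilpotencyClass_le.mpr
      (Group.nilpotencyClass_le_of_card_eq_prime_pow hcardQ (by omega))
  · have hle := Subgroup.upperCentralSeries_eq_top_iff_nilpotencyClass_le.mp htop
    have hdvd := hpG.index_mul_pow_dvd_card N
    rw [hidx, hclass, hG, ← pow_add, Nat.pow_dvd_pow_iff_le_right hp.one_lt] at hdvd
    omega

/-- If `G` is a `p`-group of maximal class and `N ⊴ G` has index `p ^ i` with
`i ≥ 3`, then `G ⧸ N` is also a `p`-group of maximal class. -/
theorem stmt_8 {p m : ℕ} (hp : p.Prime) (hm : 3 ≤ m) (G : Type*) [Group G]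
    (hG : Nat.card G = p ^ m)
    (hcl : upperCentralSeries G (m - 1) = ⊤) (hcl2 : upperCentralSeries G (m - 2) ≠ ⊤)
    (N : Subgroup G) (hN : N.Normal) (i : ℕ) (hi : 3 ≤ i) (hidx : N.index = p ^ i) :
    IsMaximalClass p (G ⧸ N) :=
  stmt_8_general hp G hG hcl hcl2 N hN i hi hidx
end

section
/- Let G be a finite p-group and A < G a subgroup of order > p. If every subgroup of G containing A as a subgroup of index p is of maximal class, then G is of maximal class. -/
/-!
A group of order `p ^ n`, `n ≥ 3`, is of maximal class exactly when its centre has order `p` and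
its quotient by the centre is of maximal class; for order `p ^ 3` maximal class just means
nonabelian. Moving up from `A` one step of index `p` at a time reduces the theorem to the case
`|G : A| = p ^ 2`.

In that case every `M` with `|M : A| = p` has a centre of order `p`. Hence `Z(G) ≤ A` (otherwise
a nontrivial element of `Z(A)` and an element of `Z(G) \ A` would both lie in the centre of one
such `M`), and then `|Z(G)| = p`. The hypotheses pass to `A / Z(G) < G / Z(G)`, so induction leaves
the case `|A| = p ^ 2`, `|G| = p ^ 4`. If `G / Z(G)` were abelian there, the conjugacy class of
`x ∈ A \ Z(G)` would lie in `x Z(G)`, so `M = C_G(x)` would be one of the subgroups of index `p`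
over `A`, with both `x` and `Z(G)` in its centre.
-/

open Subgroup QuotientGroup

section

variable {G H : Type*} [Group G] [Group H]

theorem Subgroup.card_eq_relIndex_mul_card {A M : Subgroup G} (h : A ≤ M) :
    Nat.card M = A.relIndex M * Nat.card A := by
  rw [← relIndex_bot_left, ← relIndex_bot_left, mul_comm, relIndex_mul_relIndex _ _ _ bot_le h]

theorem Subgroup.center_subgroupOf_le_center (M : Subgroup G) :
    (center G).subgroupOf M ≤ center M :=
  fun _ hx => mem_center_iff.mpr fun y => Subtype.ext (mem_center_iff.mp (mem_subgroupOf.mp hx) y)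

theorem Subgroup.center_subgroupOf_eq_center [Finite G] {M : Subgroup G} (hZM : center G ≤ M)
    (hcard : Nat.card (center M) ≤ Nat.card (center G)) : (center G).subgroupOf M = center M :=
  eq_of_le_of_card_ge (center_subgroupOf_le_center M) <| by
    rwa [Nat.card_congr (subgroupOfEquivOfLe hZM).toEquiv]

theorem Subgroup.card_center_dvd_card_center [Finite G] {M : Subgroup G} (hZM : center G ≤ M) :
    Nat.card (center G) ∣ Nat.card (center M) := by
  rw [← Nat.card_congr (subgroupOfEquivOfLe hZM).toEquiv]
  exact card_dvd_of_le (center_subgroupOf_le_center M)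

theorem Subgroup.index_centralizer_le_card [Finite G] (N : Subgroup G) {x : G}
    (hx : ∀ g : G, g * x * g⁻¹ * x⁻¹ ∈ N) : (centralizer {x}).index ≤ Nat.card N := by
  have hidx : (centralizer {x}).index = (MulAction.orbit (ConjAct G) x).ncard := by
    rw [centralizer_eq_comap_stabilizer, ← MulAction.index_stabilizer]
    exact index_comap_of_surjective _ ConjAct.toConjAct.surjective
  rw [hidx, ← Nat.card_coe_set_eq]
  refine Set.ncard_le_ncard_of_injOn (· * x⁻¹) (fun y hy => ?_)
    (fun _ _ _ _ => mul_right_cancel) (Set.toFinite _)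
  obtain ⟨g, rfl⟩ := isConj_iff.mp (isConj_comm.mp (ConjAct.mem_orbit_conjAct.mp hy))
  exact hx g

theorem Subgroup.upperCentralSeries_eq_top_of_mulEquiv (e : G ≃* H) {n : ℕ}
    (h : upperCentralSeries G n = ⊤) : upperCentralSeries H n = ⊤ := by
  rw [← comap_upperCentralSeries e.symm, h, comap_top]

theorem IsMaximalClass.of_mulEquiv {p : ℕ} (e : G ≃* H) (h : IsMaximalClass p G) :
    IsMaximalClass p H :=
  let ⟨m, hm, hcard, htop, hne⟩ := h
  ⟨m, hm, Nat.card_congr e.symm.toEquiv ▸ hcard, upperCentralSeries_eq_top_of_mulEquiv e htop,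
    fun h => hne (upperCentralSeries_eq_top_of_mulEquiv e.symm h)⟩

end

section

variable {p : ℕ} [hp : Fact p.Prime] {G : Type*} [Group G]

theorem two_le_of_card_quotient_center_eq {q : ℕ} (hq : Nat.card (G ⧸ center G) = p ^ q)
    (hZ : center G ≠ ⊤) : 2 ≤ q := by
  by_contra! hq2
  interval_cases q
  · exact hZ (index_eq_one.mp (by rw [index_eq_card, hq, pow_zero]))
  · have := isCyclic_of_prime_card (hq.trans (pow_one p))
    exact hZ (center_eq_top_iff.mpr (isMulCommutative_of_isCyclic_quotient_center_self G))

theorem card_quotient_center_eq_pow {n : ℕ} (hZ : Nat.card (center G) = p)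
    (hn : Nat.card G = p ^ (n + 1)) : Nat.card (G ⧸ center G) = p ^ n := by
  have := card_eq_card_quotient_mul_card_subgroup (center G)
  rw [hn, hZ, pow_succ] at this
  exact (Nat.eq_of_mul_eq_mul_right hp.out.pos this).symm

variable [Finite G]

theorem exists_card_quotient_center_eq_pow {n : ℕ} (hn : Nat.card G = p ^ n) (h0 : 0 < n) :
    ∃ q z, 0 < z ∧ q + z = n ∧
      Nat.card (G ⧸ center G) = p ^ q ∧ Nat.card (center G) = p ^ z := by
  obtain ⟨q, hq⟩ := IsPGroup.iff_card.mp ((IsPGroup.of_card hn).to_quotient (center G))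
  obtain ⟨z, hz0, hz⟩ := IsPGroup.card_center_eq_prime_pow hn h0
  refine ⟨q, z, hz0, ?_, hq, hz⟩
  rw [← pow_right_inj₀ hp.out.pos hp.out.ne_one, pow_add, ← hq, ← hz, ← hn,
    card_eq_card_quotient_mul_card_subgroup (center G)]

theorem nilpotencyClass_le_of_card_eq_pow {n : ℕ} (hn : Nat.card G = p ^ n) (h2 : 2 ≤ n) :
    Group.nilpotencyClass G ≤ n - 1 := by
  induction n using Nat.strong_induction_on generalizing G with
  | _ n ih =>
  have := (IsPGroup.of_card hn).isNilpotent
  by_cases hZ : center G = ⊤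
  · have : IsMulCommutative G := center_eq_top_iff.mp hZ
    have := Group.IsNilpotent.nilpotencyClass_le_one_iff.mpr this
    omega
  obtain ⟨q, z, hz0, hqz, hq, hz⟩ := exists_card_quotient_center_eq_pow hn (by omega)
  have hq2 := two_le_of_card_quotient_center_eq hq hZ
  have := ih q (by omega) hq hq2
  rw [Group.nilpotencyClass_quotient_center] at this
  omega

theorem isMaximalClass_iff_nilpotencyClass_eq {n : ℕ} (hn : Nat.card G = p ^ n) (h2 : 2 ≤ n) :
    IsMaximalClass p G ↔ Group.nilpotencyClass G = n - 1 := by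
  have := (IsPGroup.of_card hn).isNilpotent
  constructor
  · rintro ⟨m, -, hm, htop, hne⟩
    obtain rfl : m = n := by rwa [hn, pow_right_inj₀ hp.out.pos hp.out.ne_one, eq_comm] at hm
    have := Subgroup.upperCentralSeries_eq_top_iff_nilpotencyClass_le.mp htop
    have := mt Subgroup.upperCentralSeries_eq_top_iff_nilpotencyClass_le.mpr hne
    omega
  · intro h
    exact ⟨n, h2, hn, Subgroup.upperCentralSeries_eq_top_iff_nilpotencyClass_le.mpr (by omega),
      mt Subgroup.upperCentralSeries_eq_top_iff_nilpotencyClass_le.mp (by omega)⟩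

theorem IsMaximalClass.card_center {n : ℕ} (h : IsMaximalClass p G) (hn : Nat.card G = p ^ n)
    (h3 : 3 ≤ n) : Nat.card (center G) = p := by
  have := (IsPGroup.of_card hn).isNilpotent
  have hc := (isMaximalClass_iff_nilpotencyClass_eq hn (by omega)).mp h
  have hZ : center G ≠ ⊤ := fun hZ => by
    have := Group.IsNilpotent.nilpotencyClass_le_one_iff.mpr (center_eq_top_iff.mp hZ)
    omega
  obtain ⟨q, z, hz0, hqz, hq, hz⟩ := exists_card_quotient_center_eq_pow hn (by omega)
  have hq2 := two_le_of_card_quotient_center_eq hq hZ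
  have := nilpotencyClass_le_of_card_eq_pow hq hq2
  rw [Group.nilpotencyClass_quotient_center] at this
  rw [hz, show z = 1 by omega, pow_one]

theorem IsMaximalClass.quotient_center {n : ℕ} (h : IsMaximalClass p G) (hn : Nat.card G = p ^ n)
    (h3 : 3 ≤ n) : IsMaximalClass p (G ⧸ center G) := by
  have hq : Nat.card (G ⧸ center G) = p ^ (n - 1) :=
    card_quotient_center_eq_pow (h.card_center hn h3) (by rwa [Nat.sub_add_cancel (by omega)])
  rw [isMaximalClass_iff_nilpotencyClass_eq hq (by omega), Group.nilpotencyClass_quotient_center,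
    (isMaximalClass_iff_nilpotencyClass_eq hn (by omega)).mp h]

theorem IsMaximalClass.of_quotient_center (hZ : Nat.card (center G) = p)
    (h : IsMaximalClass p (G ⧸ center G)) : IsMaximalClass p G := by
  obtain ⟨m, hm, hq, -⟩ := id h
  have hn : Nat.card G = p ^ (m + 1) := by
    rw [card_eq_card_quotient_mul_card_subgroup (center G), hq, hZ, pow_succ]
  have := (IsPGroup.of_card hn).isNilpotent
  have : Nontrivial G := Finite.one_lt_card_iff_nontrivial.mp <| by
    rw [hn]; exact Nat.one_lt_pow (by omega) hp.out.one_lt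
  rw [isMaximalClass_iff_nilpotencyClass_eq hn (by omega),
    Group.nilpotencyClass_eq_quotient_center_plus_one,
    (isMaximalClass_iff_nilpotencyClass_eq hq hm).mp h]
  omega

theorem isMaximalClass_of_card_eq_pow_three (hn : Nat.card G = p ^ 3) (hG : ¬IsMulCommutative G) :
    IsMaximalClass p G := by
  have := (IsPGroup.of_card hn).isNilpotent
  rw [isMaximalClass_iff_nilpotencyClass_eq hn (by norm_num)]
  have := nilpotencyClass_le_of_card_eq_pow hn (by norm_num)
  have := mt Group.IsNilpotent.nilpotencyClass_le_one_iff.mp hG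
  omega

theorem IsPGroup.index_eq_prime_of_index_le (hG : IsPGroup p G) {M : Subgroup G} (hM : M ≠ ⊤)
    (h : M.index ≤ p) : M.index = p := by
  obtain ⟨k, hk⟩ := hG.index M
  have hk0 : k ≠ 0 := by
    rintro rfl
    exact hM (index_eq_one.mp (hk.trans (pow_zero p)))
  have : p ^ k ≤ p ^ 1 := by rwa [pow_one, ← hk]
  rw [hk, show k = 1 by have := (Nat.pow_le_pow_iff_right hp.out.one_lt).mp this; omega, pow_one]

theorem IsPGroup.exists_relIndex_eq_prime (hG : IsPGroup p G) {A H : Subgroup G} (hAH : A < H) :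
    ∃ M, A ≤ M ∧ M ≤ H ∧ A.relIndex M = p := by
  set A' := A.subgroupOf H
  obtain ⟨n, hn⟩ := IsPGroup.iff_card.mp (hG.to_subgroup H)
  obtain ⟨k, hk⟩ := IsPGroup.iff_card.mp ((hG.to_subgroup H).to_subgroup A')
  have hkn : k < n := by
    by_contra! hnk
    refine hAH.not_ge (subgroupOf_eq_top.mp (eq_top_of_le_card _ ?_))
    rw [hn, hk]
    exact Nat.pow_le_pow_right hp.out.pos hnk
  obtain ⟨K, hK, hA'K⟩ :=
    Sylow.exists_subgroup_card_pow_succ (G := H) (hn ▸ pow_dvd_pow p hkn) hk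
  have hA : A'.map H.subtype = A := by rw [subgroupOf_map_subtype, inf_of_le_left hAH.le]
  refine ⟨K.map H.subtype, hA ▸ map_mono hA'K, map_subtype_le K, ?_⟩
  rw [← hA, relIndex_map_map_of_injective _ _ H.subtype_injective]
  have := card_eq_relIndex_mul_card hA'K
  rw [hK, hk, pow_succ, mul_comm] at this
  exact (Nat.eq_of_mul_eq_mul_right (pow_pos hp.out.pos k) this).symm

theorem IsPGroup.center_le_of_forall_card_center_eq (hG : IsPGroup p G) {A : Subgroup G}
    (hA : A ≠ ⊥)
    (hM : ∀ M : Subgroup G, A ≤ M → A.relIndex M = p → Nat.card (center M) = p) :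
    center G ≤ A := by
  by_contra hZA
  have : Nontrivial A := (nontrivial_iff_ne_bot A).mpr hA
  have := (hG.to_subgroup A).center_nontrivial
  obtain ⟨u, hu⟩ := exists_ne (1 : center A)
  set v : G := ((u : A) : G)
  have hv : v ≠ 1 := fun h => hu (Subtype.ext (Subtype.ext h))
  have hAZ : A ⊔ center G ≤ centralizer {v} := by
    refine sup_le (fun a ha => mem_centralizer_singleton_iff.mpr ?_) (fun z hz => ?_)
    · exact congrArg Subtype.val (mem_center_iff.mp u.2 ⟨a, ha⟩)
    · exact mem_centralizer_singleton_iff.mpr (mem_center_iff.mp hz v).symm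
  obtain ⟨M, hAM, hMZ, hAMp⟩ := hG.exists_relIndex_eq_prime (left_lt_sup.mpr hZA)
  obtain ⟨m, hmM, hmA⟩ : ∃ m ∈ M, m ∉ A := by
    by_contra! h
    rw [relIndex_eq_one.mpr h] at hAMp
    exact hp.out.ne_one hAMp.symm
  obtain ⟨a, ha, z, hz, rfl⟩ := mem_sup_of_normal_right.mp (hMZ hmM)
  have hzM : z ∈ M := by simpa using M.mul_mem (M.inv_mem (hAM ha)) hmM
  let v' : center M := ⟨⟨v, hAM (u : A).2⟩, mem_center_iff.mpr fun w =>
    Subtype.ext (mem_centralizer_singleton_iff.mp (hAZ (hMZ w.2)))⟩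
  let z' : center M :=
    ⟨⟨z, hzM⟩, mem_center_iff.mpr fun w => Subtype.ext (mem_center_iff.mp hz w)⟩
  have hv' : v' ≠ 1 := fun h => hv (congrArg (fun w : center M => ((w : M) : G)) h)
  obtain ⟨k, hk⟩ :=
    mem_zpowers_iff.mp (mem_zpowers_of_prime_card (hM M hAM hAMp) hv' (g' := z'))
  have hvz : v ^ k = z := congrArg (fun w : center M => ((w : M) : G)) hk
  exact hmA (A.mul_mem ha (hvz ▸ A.zpow_mem (u : A).2 k))

theorem IsPGroup.card_center_eq_of_forall_card_center_eq (hG : IsPGroup p G) {A : Subgroup G}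
    (hA : A ≠ ⊤) (hZA : center G ≤ A)
    (hM : ∀ M : Subgroup G, A ≤ M → A.relIndex M = p → Nat.card (center M) = p) :
    Nat.card (center G) = p := by
  obtain ⟨M, hAM, -, hAMp⟩ := hG.exists_relIndex_eq_prime hA.lt_top
  have hdvd := hM M hAM hAMp ▸ card_center_dvd_card_center (hZA.trans hAM)
  have : Nontrivial G := by
    by_contra! h
    exact hA (Subsingleton.elim _ _)
  refine ((Nat.dvd_prime hp.out).mp hdvd).resolve_left fun h => ?_
  exact hG.bot_lt_center.ne' (card_eq_one.mp h)

theorem IsMaximalClass.map_mk'_center {M : Subgroup G} {n : ℕ} (h : IsMaximalClass p M)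
    (hn : Nat.card M = p ^ n) (h3 : 3 ≤ n) (hZ : Nat.card (center G) = p) (hZM : center G ≤ M) :
    IsMaximalClass p (M.map (mk' (center G))) := by
  have hker : center M = ((mk' (center G)).subgroupMap M).ker := by
    rw [← center_subgroupOf_eq_center hZM (by rw [h.card_center hn h3, hZ])]
    ext x
    rw [mem_subgroupOf, MonoidHom.mem_ker, ← Subtype.val_inj]
    exact (QuotientGroup.eq_one_iff _).symm
  exact (h.quotient_center hn h3).of_mulEquiv
    (liftEquiv (center M) (MonoidHom.subgroupMap_surjective _ M) hker)

theorem not_isMulCommutative_quotient_center (hG : IsPGroup p G) {A : Subgroup G}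
    (hA : Nat.card A = p ^ 2) (hAG : A.index = p ^ 2) (hZ : Nat.card (center G) = p)
    (hM : ∀ M : Subgroup G, A ≤ M → A.relIndex M = p → Nat.card (center M) = p) :
    ¬IsMulCommutative (G ⧸ center G) := by
  intro hcomm
  obtain ⟨x, hxA, hxZ⟩ : ∃ x ∈ A, x ∉ center G := by
    by_contra! h
    have := card_le_of_le h
    rw [hA, hZ] at this
    exact absurd this (not_le.mpr (lt_self_pow₀ hp.out.one_lt one_lt_two))
  set M := centralizer {x}
  have hAM : A ≤ M := by
    have := IsPGroup.isMulCommutative_of_card_eq_prime_sq hA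
    exact fun a ha => mem_centralizer_singleton_iff.mpr
      (congrArg Subtype.val (this.is_comm.comm ⟨a, ha⟩ ⟨x, hxA⟩))
  have hMp : M.index = p := by
    refine hG.index_eq_prime_of_index_le (fun h => hxZ (centralizer_eq_top_iff_subset.mp h rfl)) ?_
    refine hZ ▸ index_centralizer_le_card (center G) fun g => ?_
    rw [← QuotientGroup.eq_one_iff, mk_mul, mk_mul, mk_mul, mk_inv, mk_inv,
      hcomm.is_comm.comm (g : G ⧸ center G)]
    group
  have hAMp : A.relIndex M = p := by
    have := relIndex_mul_index hAM
    rw [hMp, hAG, sq] at this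
    exact Nat.eq_of_mul_eq_mul_right hp.out.pos this
  have hZM := center_subgroupOf_eq_center (center_le_centralizer {x}) (by rw [hM M hAM hAMp, hZ])
  have hxM : (⟨x, mem_centralizer_singleton_iff.mpr rfl⟩ : M) ∈ center M :=
    mem_center_iff.mpr fun w => Subtype.ext (mem_centralizer_singleton_iff.mp w.2)
  exact hxZ (mem_subgroupOf.mp (hZM ▸ hxM))

theorem forall_isMaximalClass_map_mk'_center (hZ : Nat.card (center G) = p) {A : Subgroup G}
    (hZA : center G ≤ A) {a : ℕ} (hA : Nat.card A = p ^ a) (ha : 2 ≤ a)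
    (hS : ∀ M : Subgroup G, A ≤ M → A.relIndex M = p → IsMaximalClass p M) :
    ∀ K : Subgroup (G ⧸ center G), A.map (mk' (center G)) ≤ K →
      (A.map (mk' (center G))).relIndex K = p → IsMaximalClass p K := by
  intro K hAK hK
  set M := K.comap (mk' (center G))
  have hA_eq : (A.map (mk' (center G))).comap (mk' (center G)) = A :=
    comap_map_eq_self (by rwa [ker_mk'])
  have hMK : M.map (mk' (center G)) = K := map_comap_eq_self_of_surjective (mk'_surjective _) K
  have hAM : A ≤ M := hA_eq ▸ comap_mono hAK
  have hAMp : A.relIndex M = p := by rwa [← hA_eq, relIndex_comap, hMK]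
  have hMcard : Nat.card M = p ^ (a + 1) := by
    rw [card_eq_relIndex_mul_card hAM, hAMp, hA, pow_succ']
  exact hMK ▸ (hS M hAM hAMp).map_mk'_center hMcard (by omega) hZ (hZA.trans hAM)

theorem isMaximalClass_of_index_eq_sq {a : ℕ} (ha : 2 ≤ a) {A : Subgroup G}
    (hA : Nat.card A = p ^ a) (hAG : A.index = p ^ 2)
    (hS : ∀ M : Subgroup G, A ≤ M → A.relIndex M = p → IsMaximalClass p M) :
    IsMaximalClass p G := by
  induction a using Nat.strong_induction_on generalizing G with | _ a ih =>
  have hG : Nat.card G = p ^ (a + 2) := by rw [← card_mul_index A, hA, hAG, pow_add]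
  have hZM (M : Subgroup G) (hAM : A ≤ M) (hAMp : A.relIndex M = p) :
      Nat.card (center M) = p :=
    (hS M hAM hAMp).card_center (by rw [card_eq_relIndex_mul_card hAM, hAMp, hA, pow_succ'])
      (by omega)
  have hA_ne_bot : A ≠ ⊥ := fun h => by
    rw [h, card_bot] at hA
    exact absurd hA (Nat.one_lt_pow (by omega) hp.out.one_lt).ne
  have hA_ne_top : A ≠ ⊤ := fun h => by
    rw [h, index_top] at hAG
    exact absurd hAG (Nat.one_lt_pow two_ne_zero hp.out.one_lt).ne
  have hZA := (IsPGroup.of_card hG).center_le_of_forall_card_center_eq hA_ne_bot hZM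
  have hZ := (IsPGroup.of_card hG).card_center_eq_of_forall_card_center_eq hA_ne_top hZA hZM
  have hq : Nat.card (G ⧸ center G) = p ^ (a + 1) := card_quotient_center_eq_pow hZ hG
  refine IsMaximalClass.of_quotient_center hZ ?_
  obtain rfl | ha3 := ha.eq_or_lt
  · exact isMaximalClass_of_card_eq_pow_three hq
      (not_isMulCommutative_quotient_center (IsPGroup.of_card hG) hA hAG hZ hZM)
  obtain ⟨b, rfl⟩ : ∃ b, a = b + 1 := ⟨a - 1, by omega⟩
  refine ih b (by omega) (by omega) (A := A.map (mk' (center G))) ?_ ?_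
    (forall_isMaximalClass_map_mk'_center hZ hZA hA ha hS)
  · have hA' := card_eq_relIndex_mul_card hZA
    rw [← ker_mk' (center G), relIndex_ker, ker_mk', hA, hZ, pow_succ] at hA'
    exact (Nat.eq_of_mul_eq_mul_right hp.out.pos hA').symm
  · rwa [A.index_map_eq (mk'_surjective _) (by rwa [ker_mk'])]

theorem IsPGroup.forall_isMaximalClass_of_relIndex_eq_prime (hG : IsPGroup p G)
    {A B : Subgroup G} (hAB : A ≤ B) (hABp : A.relIndex B = p) (hA : p < Nat.card A)
    (hS : ∀ H : Subgroup G, A ≤ H → A.relIndex H = p → IsMaximalClass p H) :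
    ∀ H : Subgroup G, B ≤ H → B.relIndex H = p → IsMaximalClass p H := by
  intro H hBH hBHp
  obtain ⟨a, hAa⟩ := IsPGroup.iff_card.mp (hG.to_subgroup A)
  have ha : 1 < a := by
    rw [← Nat.pow_lt_pow_iff_right hp.out.one_lt, pow_one, ← hAa]
    exact hA
  have hAH : A ≤ H := hAB.trans hBH
  have hA_map : (A.subgroupOf H).map H.subtype = A := by
    rw [subgroupOf_map_subtype, inf_of_le_left hAH]
  refine isMaximalClass_of_index_eq_sq ha (A := A.subgroupOf H)
    ((Nat.card_congr (subgroupOfEquivOfLe hAH).toEquiv).trans hAa) ?_ fun M hAM hAMp => ?_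
  · rw [← relIndex, ← relIndex_mul_relIndex A B H hAB hBH, hABp, hBHp, sq]
  · have hAM' : A ≤ M.map H.subtype := hA_map ▸ map_mono hAM
    rw [← relIndex_map_map_of_injective _ _ H.subtype_injective, hA_map] at hAMp
    exact (hS _ hAM' hAMp).of_mulEquiv (M.equivMapOfInjective _ H.subtype_injective).symm

end

/-- Let `G` be a finite `p`-group and `A < G` a subgroup of order `> p`. If every
subgroup of `G` containing `A` as a subgroup of index `p` is of maximal class, then
`G` is of maximal class. -/
theorem stmt_15 {p : ℕ} (hp : p.Prime) (G : Type*) [Group G] [Finite G]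
    (hpG : IsPGroup p G) (A : Subgroup G) (hA : A ≠ ⊤) (hAcard : p < Nat.card A)
    (hall : ∀ H : Subgroup G, A ≤ H → A.relIndex H = p → IsMaximalClass p H) :
    IsMaximalClass p G := by
  have := Fact.mk hp
  induction h : A.index using Nat.strong_induction_on generalizing A with | _ n ih =>
  obtain ⟨B, hAB, -, hABp⟩ := hpG.exists_relIndex_eq_prime hA.lt_top
  obtain rfl | hB_ne_top := eq_or_ne B ⊤
  · exact (hall ⊤ hAB hABp).of_mulEquiv topEquiv
  refine ih B.index ?_ B hB_ne_top ?_
    (hpG.forall_isMaximalClass_of_relIndex_eq_prime hAB hABp hAcard hall) rfl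
  · rw [← h, ← relIndex_mul_index hAB, hABp]
    exact lt_mul_left (Nat.pos_of_ne_zero index_ne_zero_of_finite) hp.one_lt
  · rw [card_eq_relIndex_mul_card hAB, hABp]
    exact hAcard.trans (lt_mul_left Nat.card_pos hp.one_lt)
end
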